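/- arXiv:1703.00461 — 6 statements merged into one kernel-verified Lean document; each statement's English description precedes it below -/
import Mathlib

section
/- For all τ ∈ ℝ, v(τ)²·φ′(τ)·φ″(τ) + φ′(τ)²·v(τ)·v′(τ) + v′(τ)·v″(τ) = c₂³·(1 − H(τ)²)²·P(H(τ)), and consequently the derivative of g satisfies g′(τ) = 2·c₂³·(1 − H(τ)²)²·P(H(τ)). -/
/-!
Both sigmoids are affine in `H`, and `H` solves the Riccati equation `H' = c₂(1 - H²)`.
Hence every derivative of `φ` and `v` is a polynomial in `H`, the first identity is a
polynomial identity in `H`, and the second is the product rule applied to `g`, whose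
derivative is twice the left-hand side of the first.
-/

open Real

theorem Real.hasDerivAt_tanh (x : ℝ) : HasDerivAt tanh (1 - tanh x ^ 2) x := by
  have hcosh : cosh x ≠ 0 := (cosh_pos x).ne'
  have hquot := (hasDerivAt_sinh x).div (hasDerivAt_cosh x) hcosh
  rw [show tanh = fun y => sinh y / cosh y from funext tanh_eq_sinh_div_cosh]
  refine hquot.congr_deriv ?_
  field_simp

theorem Real.hasDerivAt_tanh_affine (a b x : ℝ) :
    HasDerivAt (fun x => tanh (a * x - b)) (a * (1 - tanh (a * x - b) ^ 2)) x := by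
  have hinner : HasDerivAt (fun x => a * x - b) a x := by
    simpa using ((hasDerivAt_id x).const_mul a).sub_const b
  exact ((hasDerivAt_tanh (a * x - b)).comp x hinner).congr_deriv (mul_comm _ _)

section Riccati

variable {f : ℝ → ℝ} {k : ℝ}

theorem hasDerivAt_affine_of_riccati (hf : ∀ x, HasDerivAt f (k * (1 - f x ^ 2)) x)
    (a b x : ℝ) : HasDerivAt (fun x => a * f x + b) (a * k * (1 - f x ^ 2)) x := by
  simpa only [mul_assoc] using ((hf x).const_mul a).add_const b

theorem hasDerivAt_one_sub_sq_of_riccati (hf : ∀ x, HasDerivAt f (k * (1 - f x ^ 2)) x)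
    (a x : ℝ) :
    HasDerivAt (fun x => a * (1 - f x ^ 2)) (-2 * a * k * f x * (1 - f x ^ 2)) x := by
  refine ((((hf x).pow 2).const_sub 1).const_mul a).congr_deriv ?_
  ring

end Riccati

theorem hasDerivAt_sq_mul_sq_add_sq {v p w : ℝ → ℝ} {v' p' w' x : ℝ}
    (hv : HasDerivAt v v' x) (hp : HasDerivAt p p' x) (hw : HasDerivAt w w' x) :
    HasDerivAt (fun x => v x ^ 2 * p x ^ 2 + w x ^ 2)
      (2 * (v x ^ 2 * p x * p' + p x ^ 2 * v x * v' + w x * w')) x := by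
  refine (((hv.pow 2).mul (hp.pow 2)).add (hw.pow 2)).congr_deriv ?_
  simp only [Pi.pow_apply]
  ring

theorem sigmoid_acceleration_derivative_general
    (c₁ c₂ c₃ c₄ d₁ d₄ : ℝ)
    (φ v H g P : ℝ → ℝ)
    (hφ : ∀ τ, φ τ = c₁ * Real.tanh (c₂ * τ - c₃) + c₄)
    (hv : ∀ τ, v τ = d₁ * Real.tanh (c₂ * τ - c₃) + d₄)
    (hH : ∀ τ, H τ = Real.tanh (c₂ * τ - c₃))
    (hP : ∀ h, P h = -3 * c₁ ^ 2 * d₁ ^ 2 * h ^ 3 - 5 * c₁ ^ 2 * d₁ * d₄ * h ^ 2 +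
      (c₁ ^ 2 * d₁ ^ 2 - 2 * c₁ ^ 2 * d₄ ^ 2 - 2 * d₁ ^ 2) * h + c₁ ^ 2 * d₁ * d₄)
    (hg : ∀ τ, g τ = (v τ) ^ 2 * (deriv φ τ) ^ 2 + (deriv v τ) ^ 2) :
    ∀ τ : ℝ,
      (v τ) ^ 2 * deriv φ τ * deriv (deriv φ) τ +
          (deriv φ τ) ^ 2 * v τ * deriv v τ + deriv v τ * deriv (deriv v) τ =
        c₂ ^ 3 * (1 - H τ ^ 2) ^ 2 * P (H τ) ∧
      deriv g τ = 2 * c₂ ^ 3 * (1 - H τ ^ 2) ^ 2 * P (H τ) := by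
  have hRiccati τ : HasDerivAt H (c₂ * (1 - H τ ^ 2)) τ := by
    simpa only [← funext hH, ← hH] using hasDerivAt_tanh_affine c₂ c₃ τ
  obtain rfl : φ = fun τ => c₁ * H τ + c₄ := funext fun τ => by rw [hφ, hH]
  obtain rfl : v = fun τ => d₁ * H τ + d₄ := funext fun τ => by rw [hv, hH]
  have hφ' τ := hasDerivAt_affine_of_riccati hRiccati c₁ c₄ τ
  have hv' τ := hasDerivAt_affine_of_riccati hRiccati d₁ d₄ τ
  have hφ'' τ := hasDerivAt_one_sub_sq_of_riccati hRiccati (c₁ * c₂) τ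
  have hv'' τ := hasDerivAt_one_sub_sq_of_riccati hRiccati (d₁ * c₂) τ
  have hderivφ : deriv (fun τ => c₁ * H τ + c₄) = fun τ => c₁ * c₂ * (1 - H τ ^ 2) :=
    funext fun τ => (hφ' τ).deriv
  have hderivv : deriv (fun τ => d₁ * H τ + d₄) = fun τ => d₁ * c₂ * (1 - H τ ^ 2) :=
    funext fun τ => (hv' τ).deriv
  intro τ
  obtain rfl : g = _ := funext hg
  simp only [hderivφ, hderivv, (hφ'' τ).deriv, (hv'' τ).deriv]
  rw [(hasDerivAt_sq_mul_sq_add_sq (hv' τ) (hφ'' τ) (hv'' τ)).deriv, hP]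
  constructor <;> ring

/-- For the heading sigmoid `φ(τ) = c₁·tanh(c₂τ − c₃) + c₄` and velocity sigmoid
`v(τ) = d₁·tanh(c₂τ − c₃) + d₄`, with `H(τ) = tanh(c₂τ − c₃)`,
`P(h) = −3c₁²d₁²h³ − 5c₁²d₁d₄h² + (c₁²d₁² − 2c₁²d₄² − 2d₁²)h + c₁²d₁d₄`, and
`g(τ) = v(τ)²·φ′(τ)² + v′(τ)²`, one has for all `τ`
`v²·φ′·φ″ + φ′²·v·v′ + v′·v″ = c₂³·(1 − H²)²·P(H)` and `g′(τ) = 2·c₂³·(1 − H(τ)²)²·P(H(τ))`. -/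
theorem sigmoid_acceleration_derivative
    (c₁ c₂ c₃ c₄ d₁ d₄ : ℝ) (hc₂ : 0 < c₂)
    (φ v H g P : ℝ → ℝ)
    (hφ : ∀ τ, φ τ = c₁ * Real.tanh (c₂ * τ - c₃) + c₄)
    (hv : ∀ τ, v τ = d₁ * Real.tanh (c₂ * τ - c₃) + d₄)
    (hH : ∀ τ, H τ = Real.tanh (c₂ * τ - c₃))
    (hP : ∀ h, P h = -3 * c₁ ^ 2 * d₁ ^ 2 * h ^ 3 - 5 * c₁ ^ 2 * d₁ * d₄ * h ^ 2 +
      (c₁ ^ 2 * d₁ ^ 2 - 2 * c₁ ^ 2 * d₄ ^ 2 - 2 * d₁ ^ 2) * h + c₁ ^ 2 * d₁ * d₄)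
    (hg : ∀ τ, g τ = (v τ) ^ 2 * (deriv φ τ) ^ 2 + (deriv v τ) ^ 2) :
    ∀ τ : ℝ,
      (v τ) ^ 2 * deriv φ τ * deriv (deriv φ) τ +
          (deriv φ τ) ^ 2 * v τ * deriv v τ + deriv v τ * deriv (deriv v) τ =
        c₂ ^ 3 * (1 - H τ ^ 2) ^ 2 * P (H τ) ∧
      deriv g τ = 2 * c₂ ^ 3 * (1 - H τ ^ 2) ^ 2 * P (H τ) :=
  sigmoid_acceleration_derivative_general c₁ c₂ c₃ c₄ d₁ d₄ φ v H g P hφ hv hH hP hg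
end

section
/- The cubic P satisfies P(−1) = 2c₁²(d₁ − d₄)² + 2d₁² and P(1) = −2c₁²(d₁ + d₄)² − 2d₁². In particular, if d₁ ≠ 0 then P(−1) > 0 > P(1), and hence there exists h ∈ (−1, 1) with P(h) = 0. -/
/-- The cubic `P(h) = −3c₁²d₁²h³ − 5c₁²d₁d₄h² + (c₁²d₁² − 2c₁²d₄² − 2d₁²)h + c₁²d₁d₄`
satisfies `P(−1) = 2c₁²(d₁ − d₄)² + 2d₁²` and `P(1) = −2c₁²(d₁ + d₄)² − 2d₁²`; hence if
`d₁ ≠ 0` then `P(−1) > 0 > P(1)` and `P` has a root in `(−1, 1)`. -/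
theorem cubic_P_endpoint_values_and_root
    (c₁ d₁ d₄ : ℝ) (P : ℝ → ℝ)
    (hP : ∀ h, P h = -3 * c₁ ^ 2 * d₁ ^ 2 * h ^ 3 - 5 * c₁ ^ 2 * d₁ * d₄ * h ^ 2 +
      (c₁ ^ 2 * d₁ ^ 2 - 2 * c₁ ^ 2 * d₄ ^ 2 - 2 * d₁ ^ 2) * h + c₁ ^ 2 * d₁ * d₄) :
    P (-1) = 2 * c₁ ^ 2 * (d₁ - d₄) ^ 2 + 2 * d₁ ^ 2 ∧
    P 1 = -(2 * c₁ ^ 2 * (d₁ + d₄) ^ 2) - 2 * d₁ ^ 2 ∧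
    (d₁ ≠ 0 → P (-1) > 0 ∧ 0 > P 1 ∧ ∃ h ∈ Set.Ioo (-1 : ℝ) 1, P h = 0) := by
  have h1 : P (-1) = 2 * c₁ ^ 2 * (d₁ - d₄) ^ 2 + 2 * d₁ ^ 2 := by rw [hP]; ring
  have h2 : P 1 = -(2 * c₁ ^ 2 * (d₁ + d₄) ^ 2) - 2 * d₁ ^ 2 := by rw [hP]; ring
  refine ⟨h1, h2, fun hd => ?_⟩
  have hd2 : (0:ℝ) < 2 * d₁ ^ 2 := by positivity
  have hpos : 0 < P (-1) := by
    rw [h1]; have : (0:ℝ) ≤ 2 * c₁ ^ 2 * (d₁ - d₄) ^ 2 := by positivity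
    linarith
  have hneg : P 1 < 0 := by
    rw [h2]; have : (0:ℝ) ≤ 2 * c₁ ^ 2 * (d₁ + d₄) ^ 2 := by positivity
    linarith
  refine ⟨hpos, hneg, ?_⟩
  have hcont : ContinuousOn P (Set.Icc (-1:ℝ) 1) := by
    have : Continuous P := by
      have : P = fun h => -3 * c₁ ^ 2 * d₁ ^ 2 * h ^ 3 - 5 * c₁ ^ 2 * d₁ * d₄ * h ^ 2 +
        (c₁ ^ 2 * d₁ ^ 2 - 2 * c₁ ^ 2 * d₄ ^ 2 - 2 * d₁ ^ 2) * h + c₁ ^ 2 * d₁ * d₄ :=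
        funext hP
      rw [this]; continuity
    exact this.continuousOn
  have := intermediate_value_Ioo' (by norm_num : (-1:ℝ) ≤ 1) hcont
    (Set.mem_Ioo.mpr ⟨hneg, hpos⟩)
  obtain ⟨h, hh, hh0⟩ := this
  exact ⟨h, hh, hh0⟩
end

section
/- (Core of Theorem 1.) Suppose m > 0, K_d ≥ 0, v_{w,max} ≥ 0, and f_planar ∈ ℝ with f_planar > K_d·v_{w,max}², and set a_max = (f_planar − K_d·v_{w,max}²)/m. Let c₃ > 0, let S* = max_{h ∈ [−1,1]} S(h), and suppose the sigmoid timespan satisfies τ_f ≥ (2c₃/a_max)·√S* with τ_f > 0 and c₂ = 2c₃/τ_f. Then for all τ ∈ ℝ, m·√(v(τ)²·φ′(τ)² + v′(τ)²) + K_d·v_{w,max}² ≤ f_planar; i.e., the sigmoid trajectory never requires planar force exceeding f_planar. -/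
/-!
With `h = tanh (c₂τ − c₃) ∈ [−1, 1]` and `tanh' = 1 − tanh²`, the chain rule gives
`φ' = c₂ c₁ (1 − h²)` and `v' = c₂ d₁ (1 − h²)`, so `v²φ'² + v'² = c₂² S(h) ≤ c₂² S*`.
The timespan bound is exactly `c₂ √S* ≤ a_max`, and `m a_max + K_d v_wmax² = f_planar`.
-/

open Real

theorem HasDerivAt.tanh {f : ℝ → ℝ} {f' x : ℝ} (hf : HasDerivAt f f' x) :
    HasDerivAt (fun y => Real.tanh (f y)) ((1 - Real.tanh (f x) ^ 2) * f') x :=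
  (Real.hasDerivAt_tanh (f x)).comp x hf

noncomputable def tanhSigmoid (a r s b τ : ℝ) : ℝ := a * tanh (r * τ - s) + b

theorem hasDerivAt_tanhSigmoid (a r s b τ : ℝ) :
    HasDerivAt (tanhSigmoid a r s b) (r * a * (1 - tanh (r * τ - s) ^ 2)) τ := by
  have hlin : HasDerivAt (fun τ => r * τ - s) r τ := by
    simpa using ((hasDerivAt_id τ).const_mul r).sub_const s
  exact ((hlin.tanh.const_mul a).add_const b).congr_deriv (by ring)

theorem tanhSigmoid_sq_mul_deriv_sq_add_deriv_sq (c₁ c₄ d₁ d₄ r s τ : ℝ) :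
    tanhSigmoid d₁ r s d₄ τ ^ 2 * deriv (tanhSigmoid c₁ r s c₄) τ ^ 2 +
        deriv (tanhSigmoid d₁ r s d₄) τ ^ 2 =
      r ^ 2 * ((c₁ * (d₁ * tanh (r * τ - s) + d₄) * (1 - tanh (r * τ - s) ^ 2)) ^ 2 +
        (d₁ * (1 - tanh (r * τ - s) ^ 2)) ^ 2) := by
  rw [(hasDerivAt_tanhSigmoid c₁ r s c₄ τ).deriv, (hasDerivAt_tanhSigmoid d₁ r s d₄ τ).deriv,
    tanhSigmoid]
  ring

theorem div_mul_le_of_div_mul_le {a t k x : ℝ} (ha : 0 < a) (ht : 0 < t) (h : k / a * x ≤ t) :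
    k / t * x ≤ a := by
  rw [div_mul_eq_mul_div, div_le_iff₀ ha] at h
  rw [div_mul_eq_mul_div, div_le_iff₀ ht, mul_comm a]
  exact h

theorem sigmoid_timespan_respects_thrust_general
    (m K_d v_wmax f_planar a_max : ℝ)
    (hm : 0 < m)
    (hf : K_d * v_wmax ^ 2 < f_planar)
    (ha : a_max = (f_planar - K_d * v_wmax ^ 2) / m)
    (c₁ c₂ c₃ c₄ d₁ d₄ τ_f Sstar : ℝ)
    (hc₃ : 0 < c₃) (hτf : 0 < τ_f) (hc₂ : c₂ = 2 * c₃ / τ_f)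
    (S φ v : ℝ → ℝ)
    (hS : ∀ h, S h = (c₁ * (d₁ * h + d₄) * (1 - h ^ 2)) ^ 2 + (d₁ * (1 - h ^ 2)) ^ 2)
    (hSstar : IsGreatest (S '' Set.Icc (-1 : ℝ) 1) Sstar)
    (hτ : τ_f ≥ 2 * c₃ / a_max * Real.sqrt Sstar)
    (hφ : ∀ τ, φ τ = c₁ * Real.tanh (c₂ * τ - c₃) + c₄)
    (hv : ∀ τ, v τ = d₁ * Real.tanh (c₂ * τ - c₃) + d₄) :
    ∀ τ : ℝ,
      m * Real.sqrt ((v τ) ^ 2 * (deriv φ τ) ^ 2 + (deriv v τ) ^ 2) +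
        K_d * v_wmax ^ 2 ≤ f_planar := by
  intro τ
  obtain rfl : φ = tanhSigmoid c₁ c₂ c₃ c₄ := funext hφ
  obtain rfl : v = tanhSigmoid d₁ c₂ c₃ d₄ := funext hv
  have ha_pos : 0 < a_max := by rw [ha]; exact div_pos (by linarith) hm
  have hc₂_nonneg : 0 ≤ c₂ := by rw [hc₂]; positivity
  set h := tanh (c₂ * τ - c₃)
  have hSh : S h ≤ Sstar :=
    hSstar.2 ⟨h, ⟨(neg_one_lt_tanh _).le, (tanh_lt_one _).le⟩, rfl⟩
  calc m * √(tanhSigmoid d₁ c₂ c₃ d₄ τ ^ 2 * deriv (tanhSigmoid c₁ c₂ c₃ c₄) τ ^ 2 +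
          deriv (tanhSigmoid d₁ c₂ c₃ d₄) τ ^ 2) + K_d * v_wmax ^ 2
      = m * (c₂ * √(S h)) + K_d * v_wmax ^ 2 := by
        rw [tanhSigmoid_sq_mul_deriv_sq_add_deriv_sq, ← hS, sqrt_mul' _ (by rw [hS]; positivity),
          sqrt_sq hc₂_nonneg]
    _ ≤ m * (c₂ * √Sstar) + K_d * v_wmax ^ 2 := by gcongr
    _ ≤ m * a_max + K_d * v_wmax ^ 2 := by
        rw [hc₂]; gcongr; exact div_mul_le_of_div_mul_le ha_pos hτf hτ
    _ = f_planar := by rw [ha]; field_simp; ring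

/-- Core of Theorem 1: if the sigmoid timespan satisfies `τ_f ≥ (2c₃/a_max)·√S*`, where
`S*` is the maximum of `S(h) = (c₁·(d₁h + d₄)·(1 − h²))² + (d₁·(1 − h²))²` on `[−1, 1]` and
`a_max = (f_planar − K_d·v_wmax²)/m`, then with rate `c₂ = 2c₃/τ_f` the sigmoid trajectory
never requires planar force exceeding `f_planar`:
`m·√(v²φ′² + v′²) + K_d·v_wmax² ≤ f_planar` for all `τ`. -/
theorem sigmoid_timespan_respects_thrust
    (m K_d v_wmax f_planar a_max : ℝ)
    (hm : 0 < m) (hKd : 0 ≤ K_d) (hvw : 0 ≤ v_wmax)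
    (hf : K_d * v_wmax ^ 2 < f_planar)
    (ha : a_max = (f_planar - K_d * v_wmax ^ 2) / m)
    (c₁ c₂ c₃ c₄ d₁ d₄ τ_f Sstar : ℝ)
    (hc₃ : 0 < c₃) (hτf : 0 < τ_f) (hc₂ : c₂ = 2 * c₃ / τ_f)
    (S φ v : ℝ → ℝ)
    (hS : ∀ h, S h = (c₁ * (d₁ * h + d₄) * (1 - h ^ 2)) ^ 2 + (d₁ * (1 - h ^ 2)) ^ 2)
    (hSstar : IsGreatest (S '' Set.Icc (-1 : ℝ) 1) Sstar)
    (hτ : τ_f ≥ 2 * c₃ / a_max * Real.sqrt Sstar)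
    (hφ : ∀ τ, φ τ = c₁ * Real.tanh (c₂ * τ - c₃) + c₄)
    (hv : ∀ τ, v τ = d₁ * Real.tanh (c₂ * τ - c₃) + d₄) :
    ∀ τ : ℝ,
      m * Real.sqrt ((v τ) ^ 2 * (deriv φ τ) ^ 2 + (deriv v τ) ^ 2) +
        K_d * v_wmax ^ 2 ≤ f_planar :=
  sigmoid_timespan_respects_thrust_general m K_d v_wmax f_planar a_max hm hf ha c₁ c₂ c₃ c₄ d₁ d₄
    τ_f Sstar hc₃ hτf hc₂ S φ v hS hSstar hτ hφ hv
end

section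
/- (Theorem 2, thrust part.) Let m, r_min, K_d > 0, v_air ≥ 0, and f_planar ∈ ℝ with K_d·v_air² < f_planar. Let v_c > 0 be the positive root of (m/r_min + K_d)·v² + 2·K_d·v_air·v + (K_d·v_air² − f_planar) = 0 (which exists and is unique). Then for every speed v with 0 ≤ v ≤ v_c and every turn radius r_t ≥ r_min, m·v²/r_t + K_d·(v + v_air)² ≤ f_planar; i.e., a vehicle cruising at speed at most v_c does not violate its planar thrust limit when making any turn of radius at least r_min against a wind of speed at most v_air. -/
/-- Theorem 2, thrust part: if `v_c > 0` is the positive root of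
`(m/r_min + K_d)·v² + 2·K_d·v_air·v + (K_d·v_air² − f_planar) = 0`, then for every speed
`0 ≤ v ≤ v_c` and every turn radius `r_t ≥ r_min`, the required planar force satisfies
`m·v²/r_t + K_d·(v + v_air)² ≤ f_planar`. -/
theorem cruise_velocity_respects_thrust
    (m r_min K_d v_air f_planar v_c : ℝ)
    (hm : 0 < m) (hr : 0 < r_min) (hKd : 0 < K_d) (hva : 0 ≤ v_air)
    (hf : K_d * v_air ^ 2 < f_planar)
    (hvc : 0 < v_c)
    (hroot : (m / r_min + K_d) * v_c ^ 2 + 2 * K_d * v_air * v_c +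
      (K_d * v_air ^ 2 - f_planar) = 0) :
    ∀ v : ℝ, 0 ≤ v → v ≤ v_c → ∀ r_t : ℝ, r_min ≤ r_t →
      m * v ^ 2 / r_t + K_d * (v + v_air) ^ 2 ≤ f_planar := by
  intro v hv hvle r_t hrt
  have hrt0 : 0 < r_t := lt_of_lt_of_le hr hrt
  have h1 : m * v ^ 2 / r_t ≤ m * v ^ 2 / r_min := by
    apply div_le_div_of_nonneg_left (by positivity) hr hrt
  have h2 : m * v ^ 2 / r_min + K_d * (v + v_air) ^ 2 ≤ f_planar := by
    have hm' : 0 ≤ m / r_min := by positivity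
    have hc : m * v ^ 2 / r_min = (m / r_min) * v ^ 2 := by ring
    rw [hc]
    have hd : 0 ≤ (v_c - v) * (v_c + v) :=
      mul_nonneg (sub_nonneg.2 hvle) (add_pos_of_pos_of_nonneg hvc hv).le
    nlinarith [mul_nonneg hm' hd, mul_nonneg hKd.le hd,
      mul_nonneg (mul_nonneg hKd.le hva) (sub_nonneg.2 hvle)]
  linarith
end

section
/- (Correctness of the clearance heading construction, Eqs. 8–10.) Let p, q be points in the Euclidean plane ℝ², let r = dist(p, q), and let 0 < r_c < r. Set φ_h = arcsin(r_c/r), let u = (q − p)/r be the unit vector from p toward q, and define p_h = p + √(r² − r_c²) · R_{φ_h}(u), where R_{φ_h} is the rotation of the plane by angle φ_h. Then dist(q, p_h) = r_c and the vectors p_h − p and q − p_h are orthogonal (⟨p_h − p, q − p_h⟩ = 0); i.e., the ray from p through p_h is tangent to the circle of radius r_c centered at the obstacle point q. -/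
open scoped RealInnerProductSpace

/-!
Write `s = √(r² - r_c²)` and `v = exp (φ_h i) · u`, a unit vector. Since
`exp (φ_h i) = (s + r_c i) / r`, the identity `(s - r_c i) · exp (φ_h i) = r` turns
`q - p = r u` into `q - p = s v - r_c i v`. Hence `p_h - p = s v` and `q - p_h = -r_c i v`:
the second is the first direction turned by a right angle, so the two are orthogonal, and it
has length `r_c`.
-/

namespace Complex

theorem exp_arcsin_mul_I {x : ℝ} (hx₁ : -1 ≤ x) (hx₂ : x ≤ 1) :
    exp (Real.arcsin x * I) = √(1 - x ^ 2) + x * I := by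
  rw [exp_mul_I, ← ofReal_cos, ← ofReal_sin, Real.cos_arcsin, Real.sin_arcsin hx₁ hx₂]

theorem sqrt_sub_mul_I_mul_exp_arcsin {r c : ℝ} (hr : 0 < r) (hc : |c| ≤ r) :
    (√(r ^ 2 - c ^ 2) - c * I) * exp (Real.arcsin (c / r) * I) = r := by
  obtain ⟨hc₁, hc₂⟩ := abs_le.mp hc
  have hsqrt : √(1 - (c / r) ^ 2) = √(r ^ 2 - c ^ 2) / r := by
    rw [show 1 - (c / r) ^ 2 = (r ^ 2 - c ^ 2) / r ^ 2 by field_simp,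
      Real.sqrt_div' _ (sq_nonneg r), Real.sqrt_sq hr.le]
  have hsq : (√(r ^ 2 - c ^ 2) : ℂ) ^ 2 = r ^ 2 - c ^ 2 := by
    exact_mod_cast Real.sq_sqrt (sub_nonneg.mpr (sq_le_sq' hc₁ hc₂))
  have hrC : (r : ℂ) ≠ 0 := by exact_mod_cast hr.ne'
  rw [exp_arcsin_mul_I (by rw [le_div_iff₀ hr]; linarith) (by rw [div_le_one hr]; exact hc₂),
    hsqrt]
  push_cast
  field_simp
  linear_combination hsq - (c : ℂ) ^ 2 * I_sq

theorem inner_ofReal_mul_I_mul_self (a b : ℝ) (v : ℂ) : ⟪(a : ℂ) * v, b * I * v⟫ = 0 := by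
  simp only [Complex.inner, mul_re, mul_im, map_mul, conj_ofReal, conj_re, conj_im, ofReal_re,
    ofReal_im, I_re, I_im]
  ring

end Complex

/-- Correctness of the clearance heading construction (Eqs. 8–10): identifying the
Euclidean plane with `ℂ` (rotation by angle `θ` being multiplication by `exp(θ·i)`), for a
vehicle at `p`, obstacle point `q` at distance `r = dist p q`, clearance radius
`0 < r_c < r`, `φ_h = arcsin(r_c/r)`, unit vector `u = (q − p)/r`, and candidate heading
point `p_h = p + √(r² − r_c²)·R_{φ_h}(u)`, one has `dist q p_h = r_c` and
`⟪p_h − p, q − p_h⟫ = 0`: the ray from `p` through `p_h` is tangent to the circle of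
radius `r_c` about `q`. -/
theorem clearance_heading_tangent
    (p q : ℂ) (r r_c φ_h : ℝ) (u p_h : ℂ)
    (hr : r = dist p q) (hrc : 0 < r_c) (hrcr : r_c < r)
    (hφh : φ_h = Real.arcsin (r_c / r))
    (hu : u = (q - p) / (r : ℂ))
    (hph : p_h = p + (Real.sqrt (r ^ 2 - r_c ^ 2) : ℂ) * (Complex.exp (φ_h * Complex.I) * u)) :
    dist q p_h = r_c ∧ ⟪p_h - p, q - p_h⟫ = 0 := by
  have hr0 : 0 < r := hrc.trans hrcr
  set v := Complex.exp (φ_h * Complex.I) * u with hv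
  have hqp : q - p = √(r ^ 2 - r_c ^ 2) * v - r_c * Complex.I * v := by
    rw [← sub_mul, hv, ← mul_assoc, hφh,
      Complex.sqrt_sub_mul_I_mul_exp_arcsin hr0 (by rw [abs_of_pos hrc]; exact hrcr.le), hu,
      mul_div_cancel₀ _ (Complex.ofReal_ne_zero.mpr hr0.ne')]
  have hphp : p_h - p = √(r ^ 2 - r_c ^ 2) * v := by rw [hph, add_sub_cancel_left]
  have hqph : q - p_h = -(r_c * Complex.I * v) := by
    rw [← sub_sub_sub_cancel_right q p_h p, hqp, hphp]
    ring
  have hnorm_v : ‖v‖ = 1 := by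
    rw [hv, norm_mul, Complex.norm_exp_ofReal_mul_I, one_mul, hu, norm_div, Complex.norm_real,
      Real.norm_eq_abs, abs_of_pos hr0, ← Complex.dist_eq, dist_comm, ← hr, div_self hr0.ne']
  refine ⟨?_, ?_⟩
  · rw [Complex.dist_eq, hqph, norm_neg, norm_mul, norm_mul, hnorm_v, Complex.norm_I,
      Complex.norm_real, Real.norm_of_nonneg hrc.le, mul_one, mul_one]
  · rw [hphp, hqph, inner_neg_right, Complex.inner_ofReal_mul_I_mul_self, neg_zero]
end

section
/- (Clearance guarantee of the tangent heading.) With p, q, r = dist(p, q), 0 < r_c < r, φ_h = arcsin(r_c/r), u = (q − p)/r, and p_h = p + √(r² − r_c²)·R_{φ_h}(u) as above, every point on the line through p in the direction p_h − p keeps distance at least r_c from q: for all t ∈ ℝ, dist(p + t·(p_h − p), q) ≥ r_c, with equality when t = 1. -/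
/-!
Write `s = √(r² − r_c²)` and `e = exp(i φ_h)`. Since `sin φ_h = r_c / r` and `cos φ_h = s / r`,
we have `r e = s + i r_c`, whence `s e − r = i r_c e`. As `q − p = r u`, every point of the line is
`p + t (p_h − p) − q = ((t − 1) s + i r_c) e u`, and `e u` is a unit vector; so its distance to `q`
is `‖(t − 1) s + i r_c‖`, which is at least its imaginary part `r_c`, with equality at `t = 1`.
-/

open Complex

lemma Complex.exp_arcsin_mul_I_s11 {x : ℝ} (hx₁ : -1 ≤ x) (hx₂ : x ≤ 1) :
    exp (Real.arcsin x * I) = √(1 - x ^ 2) + x * I := by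
  rw [exp_mul_I, ← ofReal_cos, ← ofReal_sin, Real.cos_arcsin, Real.sin_arcsin hx₁ hx₂]

lemma Complex.ofReal_mul_exp_arcsin_div_mul_I {a r : ℝ} (hr : 0 < r) (ha : |a| ≤ r) :
    r * exp (Real.arcsin (a / r) * I) = √(r ^ 2 - a ^ 2) + a * I := by
  obtain ⟨ha₁, ha₂⟩ := abs_le.mp ha
  have hsqrt : √(1 - (a / r) ^ 2) = √(r ^ 2 - a ^ 2) / r := by
    rw [show 1 - (a / r) ^ 2 = (r ^ 2 - a ^ 2) / r ^ 2 by field_simp,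
      Real.sqrt_div' _ (sq_nonneg r), Real.sqrt_sq hr.le]
  rw [exp_arcsin_mul_I_s11 (by rwa [le_div_iff₀ hr, neg_one_mul]) (by rwa [div_le_one hr]), hsqrt]
  have : (r : ℂ) ≠ 0 := ofReal_ne_zero.mpr hr.ne'
  push_cast
  field_simp

lemma Complex.sqrt_sub_sq_mul_exp_arcsin_sub {a r : ℝ} (hr : 0 < r) (ha : |a| ≤ r) :
    √(r ^ 2 - a ^ 2) * exp (Real.arcsin (a / r) * I) - r =
      a * I * exp (Real.arcsin (a / r) * I) := by
  have hre := ofReal_mul_exp_arcsin_div_mul_I hr ha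
  have hs : (√(r ^ 2 - a ^ 2) : ℂ) ^ 2 = r ^ 2 - a ^ 2 := by
    exact_mod_cast Real.sq_sqrt (sub_nonneg.mpr (sq_le_sq' (abs_le.mp ha).1 (abs_le.mp ha).2))
  have : (r : ℂ) ≠ 0 := ofReal_ne_zero.mpr hr.ne'
  apply mul_left_cancel₀ this
  linear_combination (√(r ^ 2 - a ^ 2) - a * I) * hre + hs - a ^ 2 * I_sq

lemma Complex.abs_le_norm_ofReal_add_mul_I (x y : ℝ) : |y| ≤ ‖(x : ℂ) + y * I‖ := by
  simpa using abs_im_le_norm (x + y * I)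

/-- Clearance guarantee of the tangent heading: identifying the Euclidean plane with `ℂ`
(rotation by angle `θ` being multiplication by `exp(θ·i)`), with vehicle position `p`,
obstacle point `q` at distance `r = dist p q`, clearance radius `0 < r_c < r`,
`φ_h = arcsin(r_c/r)`, `u = (q − p)/r`, and `p_h = p + √(r² − r_c²)·R_{φ_h}(u)`, every
point on the line through `p` in direction `p_h − p` keeps distance at least `r_c` from
`q`, with equality at `t = 1`. -/
theorem clearance_heading_line_clears_obstacle
    (p q : ℂ) (r r_c φ_h : ℝ) (u p_h : ℂ)
    (hr : r = dist p q) (hrc : 0 < r_c) (hrcr : r_c < r)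
    (hφh : φ_h = Real.arcsin (r_c / r))
    (hu : u = (q - p) / (r : ℂ))
    (hph : p_h = p + (Real.sqrt (r ^ 2 - r_c ^ 2) : ℂ) * (Complex.exp (φ_h * Complex.I) * u)) :
    (∀ t : ℝ, r_c ≤ dist (p + (t : ℂ) * (p_h - p)) q) ∧
    dist (p + (1 : ℂ) * (p_h - p)) q = r_c := by
  have hr0 : 0 < r := hrc.trans hrcr
  have hrc_le : |r_c| ≤ r := by rw [abs_of_pos hrc]; exact hrcr.le
  have hqp : q - p = r * u := by rw [hu, mul_div_cancel₀ _ (ofReal_ne_zero.mpr hr0.ne')]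
  have hu_norm : ‖u‖ = 1 := by
    rw [hu, norm_div, ← dist_eq, dist_comm, ← hr, norm_real, Real.norm_of_nonneg hr0.le,
      div_self hr0.ne']
  have htangent := sqrt_sub_sq_mul_exp_arcsin_sub hr0 hrc_le
  rw [← hφh] at htangent
  have hline (t : ℝ) : dist (p + t * (p_h - p)) q =
      ‖(((t - 1) * √(r ^ 2 - r_c ^ 2) : ℝ) : ℂ) + r_c * I‖ := by
    have hfactor : p + t * (p_h - p) - q =
        ((((t - 1) * √(r ^ 2 - r_c ^ 2) : ℝ) : ℂ) + r_c * I) * (exp (φ_h * I) * u) := by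
      rw [hph]
      push_cast
      linear_combination -hqp + u * htangent
    rw [dist_eq, hfactor, norm_mul, norm_mul, norm_exp_ofReal_mul_I, hu_norm, one_mul, mul_one]
  refine ⟨fun t => ?_, ?_⟩
  · rw [hline]
    exact (le_abs_self r_c).trans (abs_le_norm_ofReal_add_mul_I _ _)
  · rw [← ofReal_one, hline]
    simp [abs_of_pos hrc]
end
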